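/- arXiv:2509.02960 — 2 statements merged into one kernel-verified Lean document; each statement's English description precedes it below -/
import Mathlib

section
/- Let P and P' be d-dimensional smooth prismatoids in ℝ^d which are Minkowski equivalent and whose tops and bottoms are parallel to the coordinate hyperplane {x : x_d = 0}. Let S_0, …, S_h be the slices of P and S'_0, …, S'_{h'} the slices of P'. If for every l ∈ {0,…,h} and every m ∈ {0,…,h'} the pair (S_l, S'_m) has the Integer Decomposition Property, then (P, P') has the Integer Decomposition Property. -/
open Pointwise

noncomputable section

/-- A point of `ℝ^d` is a *lattice point* if all its coordinates are integers. -/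
def IsLatticePoint {d : ℕ} (x : Fin d → ℝ) : Prop :=
  ∀ i, ∃ n : ℤ, x i = (n : ℝ)

/-- A *polytope* is the convex hull of finitely many points. -/
def IsPolytope {E : Type*} [AddCommGroup E] [Module ℝ E] (P : Set E) : Prop :=
  ∃ V : Finset E, P = convexHull ℝ (V : Set E)

/-- A *lattice polytope* in `ℝ^d` is the convex hull of finitely many lattice points. -/
def IsLatticePolytope {d : ℕ} (P : Set (Fin d → ℝ)) : Prop :=
  ∃ V : Finset (Fin d → ℝ), (∀ v ∈ V, IsLatticePoint v) ∧
    P = convexHull ℝ (V : Set (Fin d → ℝ))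

/-- The subset of `P` on which the linear functional `u` is maximized. -/
def maxFace {E : Type*} [AddCommGroup E] [Module ℝ E] (P : Set E) (u : E →ₗ[ℝ] ℝ) : Set E :=
  {x ∈ P | ∀ y ∈ P, u y ≤ u x}

/-- `F` is a face of `P` if it is the maximizing set of some linear functional on `P`. -/
def IsFaceOf {E : Type*} [AddCommGroup E] [Module ℝ E] (P F : Set E) : Prop :=
  ∃ u : E →ₗ[ℝ] ℝ, F = maxFace P u

/-- The dimension of a subset: the rank of the direction of its affine span. -/
def dimSet {E : Type*} [AddCommGroup E] [Module ℝ E] (F : Set E) : ℕ :=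
  Module.finrank ℝ (affineSpan ℝ F).direction

/-- Two sets are parallel if the directions (linear parts) of their affine spans coincide. -/
def AreParallel {E : Type*} [AddCommGroup E] [Module ℝ E] (F G : Set E) : Prop :=
  (affineSpan ℝ F).direction = (affineSpan ℝ G).direction

/-- A facet is a face of codimension one. -/
def IsFacetOf {E : Type*} [AddCommGroup E] [Module ℝ E] (P F : Set E) : Prop :=
  IsFaceOf P F ∧ dimSet F + 1 = dimSet P

/-- A vertex of `P` is a point whose singleton is a face of `P`. -/
def IsVertexOf {E : Type*} [AddCommGroup E] [Module ℝ E] (P : Set E) (v : E) : Prop :=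
  IsFaceOf P {v}

/-- An edge of `P` is a one-dimensional face of `P`. -/
def IsEdgeOf {E : Type*} [AddCommGroup E] [Module ℝ E] (P F : Set E) : Prop :=
  IsFaceOf P F ∧ dimSet F = 1

/-- A polytope in `ℝ^d` is simple if every vertex is contained in exactly `d` edges. -/
def IsSimplePolytope {d : ℕ} (P : Set (Fin d → ℝ)) : Prop :=
  ∀ v : Fin d → ℝ, IsVertexOf P v →
    {F : Set (Fin d → ℝ) | IsEdgeOf P F ∧ v ∈ F}.ncard = d

/-- An integer vector is primitive if it is not a nontrivial integer multiple of
another integer vector (in particular it is nonzero). -/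
def IsPrimitiveVector {d : ℕ} (u : Fin d → ℤ) : Prop :=
  ∀ (k : ℤ) (w : Fin d → ℤ), u = k • w → IsUnit k

/-- `u` is a primitive edge direction of `P` at the vertex `v`: a primitive lattice vector
pointing from `v` along an edge of `P` incident to `v`. -/
def IsPrimitiveEdgeDirectionAt {d : ℕ} (P : Set (Fin d → ℝ)) (v : Fin d → ℝ)
    (u : Fin d → ℤ) : Prop :=
  IsPrimitiveVector u ∧
    ∃ F : Set (Fin d → ℝ), IsEdgeOf P F ∧ v ∈ F ∧
      ∃ ε : ℝ, 0 < ε ∧ (v + ε • fun i => (u i : ℝ)) ∈ F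

/-- A lattice polytope is smooth if it is simple and, at each vertex, the primitive
edge directions form a `ℤ`-basis of `ℤ^d`. -/
def IsSmoothPolytope {d : ℕ} (P : Set (Fin d → ℝ)) : Prop :=
  IsLatticePolytope P ∧ IsSimplePolytope P ∧
    ∀ v : Fin d → ℝ, IsVertexOf P v →
      ∃ b : Module.Basis (Fin d) ℤ (Fin d → ℤ), ∀ i, IsPrimitiveEdgeDirectionAt P v (b i)

/-- The unit cube `[0,1]^d`. -/
def unitCube (d : ℕ) : Set (Fin d → ℝ) := {x | ∀ i, x i ∈ Set.Icc (0 : ℝ) 1}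

/-- A `d`-dimensional combinatorial cube: a `d`-dimensional lattice polytope whose face
poset is order-isomorphic to the face poset of the unit cube `[0,1]^d`. -/
def IsCombinatorialCube (d : ℕ) (C : Set (Fin d → ℝ)) : Prop :=
  IsLatticePolytope C ∧ dimSet C = d ∧
    Nonempty ({F : Set (Fin d → ℝ) // IsFaceOf (unitCube d) F} ≃o
              {F : Set (Fin d → ℝ) // IsFaceOf C F})

/-- The pair `(P, Q)` has the Integer Decomposition Property: every lattice point of the
Minkowski sum `P + Q` is a sum of a lattice point of `P` and a lattice point of `Q`. -/
def IsIDPPair {d : ℕ} (P Q : Set (Fin d → ℝ)) : Prop :=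
  ∀ x : Fin d → ℝ, IsLatticePoint x → x ∈ P + Q →
    ∃ p ∈ P, ∃ q ∈ Q, IsLatticePoint p ∧ IsLatticePoint q ∧ x = p + q

/-- `P` and `Q` are Minkowski equivalent (have the same normal fan): two linear functionals
are maximized on the same face of `P` if and only if they are maximized on the same face
of `Q`. -/
def MinkowskiEquivalent {E : Type*} [AddCommGroup E] [Module ℝ E] (P Q : Set E) : Prop :=
  ∀ u v : E →ₗ[ℝ] ℝ, maxFace P u = maxFace P v ↔ maxFace Q u = maxFace Q v

/-- `P` is a `d`-dimensional prismatoid with top facet `T` and bottom facet `B`: a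
`d`-dimensional lattice polytope whose face poset is order-isomorphic to the face poset of
a prism `Q × [0,1]` over a `(d-1)`-dimensional polytope `Q`, where `T` and `B` are the
faces corresponding to `Q × {1}` and `Q × {0}` respectively, and `T` and `B` are parallel. -/
def IsPrismatoid (d : ℕ) (P T B : Set (Fin d → ℝ)) : Prop :=
  IsLatticePolytope P ∧ dimSet P = d ∧
    ∃ Q : Set (Fin (d - 1) → ℝ), IsPolytope Q ∧ dimSet Q = d - 1 ∧
      ∃ φ : {F : Set ((Fin (d - 1) → ℝ) × ℝ) // IsFaceOf (Q ×ˢ Set.Icc (0 : ℝ) 1) F} ≃o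
            {F : Set (Fin d → ℝ) // IsFaceOf P F},
        (∃ hT : IsFaceOf (Q ×ˢ Set.Icc (0 : ℝ) 1) (Q ×ˢ ({1} : Set ℝ)),
            (φ ⟨Q ×ˢ ({1} : Set ℝ), hT⟩).1 = T) ∧
        (∃ hB : IsFaceOf (Q ×ˢ Set.Icc (0 : ℝ) 1) (Q ×ˢ ({0} : Set ℝ)),
            (φ ⟨Q ×ˢ ({0} : Set ℝ), hB⟩).1 = B) ∧
        AreParallel T B

/-- The face `F_I^J` of the unit cube given by disjoint index sets `I` (coordinates pinned
to `0`) and `J` (coordinates pinned to `1`). -/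
def cubeFace (d : ℕ) (I J : Set (Fin d)) : Set (Fin d → ℝ) :=
  {x ∈ unitCube d | (∀ k ∈ I, x k = 0) ∧ (∀ k ∈ J, x k = 1)}

/-- Under a fixed order isomorphism `φ` from the face poset of the unit cube to the face
poset of `C`, the set `F` is the face of `C` corresponding to the face `F_I^J` of the
unit cube. -/
def IsCubeFaceImage {d : ℕ} {C : Set (Fin d → ℝ)}
    (φ : {F : Set (Fin d → ℝ) // IsFaceOf (unitCube d) F} ≃o
         {F : Set (Fin d → ℝ) // IsFaceOf C F})
    (I J : Set (Fin d)) (F : Set (Fin d → ℝ)) : Prop :=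
  ∃ h : IsFaceOf (unitCube d) (cubeFace d I J), (φ ⟨cubeFace d I J, h⟩).1 = F

/-- The last coordinate index of `Fin d` (for `0 < d`). -/
def lastIdx (d : ℕ) (hd : 0 < d) : Fin d := ⟨d - 1, Nat.sub_lt hd Nat.one_pos⟩

/-- The linear functional `x ↦ ⟨y, x⟩ = ∑ i, y i * x i` on `ℝ^d`. -/
def dotL {d : ℕ} (y : Fin d → ℝ) : (Fin d → ℝ) →ₗ[ℝ] ℝ :=
  ∑ i, y i • LinearMap.proj (R := ℝ) (φ := fun _ : Fin d => ℝ) i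

/-!
Every vertex of a prismatoid lies on its top or bottom: a vertex is a minimal face, and the
minimal faces of a prism `Q × [0,1]` lie in `Q × {0}` or `Q × {1}`. Hence `P` is a Cayley
polytope: the convex hull of two finite sets `Bot` and `Top` on the hyperplanes `x_d = b` and
`x_d = b + h`, with `h > 0`.

For a linear functional `w`, let `δ = (max_Top w - max_Bot w) / h`. By convexity
`w x ≤ max_Bot w + δ (x_d - b)` on `P`, and the face of `P` maximizing `w + r x_d` contains a
vertex of the bottom for `r ≤ -δ` and lies in the top for `r > -δ`. The normal fan therefore detects `δ`, so
Minkowski equivalent prismatoids have the same slopes `δ` for every `w`.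

Now let `x ∈ P + P'` be a lattice point. Its height is `b + b' + l + m` with integers
`0 ≤ l ≤ h`, `0 ≤ m ≤ h'`. Because the slopes agree, every functional is bounded at `x` by its
maximum over `((1 - l/h) conv Bot + (l/h) conv Top) + ((1 - m/h') conv Bot' + (m/h') conv Top')`,
a compact convex subset of `S_l + S'_m`. So `x` lies in `S_l + S'_m`, and IDP for the pair of
slices decomposes it.
-/

open Set

section ConvexHull

variable {E : Type*} [AddCommGroup E] [Module ℝ E]

lemma le_of_mem_convexHull (f : E →ₗ[ℝ] ℝ) {S : Set E} {M : ℝ} (h : ∀ v ∈ S, f v ≤ M)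
    {y : E} (hy : y ∈ convexHull ℝ S) : f y ≤ M :=
  convexHull_min h (convex_halfSpace_le f.isLinear M) hy

lemma maxFace_subset (P : Set E) (u : E →ₗ[ℝ] ℝ) : maxFace P u ⊆ P := fun _ hx => hx.1

lemma maxFace_zero (P : Set E) : maxFace P 0 = P := by
  ext; simp [maxFace]

lemma MinkowskiEquivalent.symm {P Q : Set E} (h : MinkowskiEquivalent P Q) :
    MinkowskiEquivalent Q P :=
  fun u v => (h u v).symm

end ConvexHull

section Vertices

variable {E : Type*} [NormedAddCommGroup E] [NormedSpace ℝ E]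

lemma convexHull_extremePoints_of_finite {K : Set E} (hK : IsCompact K) (hKc : Convex ℝ K)
    (hfin : (K.extremePoints ℝ).Finite) : convexHull ℝ (K.extremePoints ℝ) = K := by
  rw [← (hfin.isCompact_convexHull ℝ).isClosed.closure_eq]
  exact closure_convexHull_extremePoints hK hKc

lemma isFaceOf_singleton_of_mem_extremePoints {P : Set E} (hP : IsCompact P)
    (hPc : Convex ℝ P) (hfin : (P.extremePoints ℝ).Finite) {z : E}
    (hz : z ∈ P.extremePoints ℝ) : IsFaceOf P {z} := by
  -- Separate `z` from the other extreme points; the exposed face cut out has `z` as its only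
  -- extreme point, so by Krein-Milman it is `{z}`.
  have hzW : z ∉ convexHull ℝ (P.extremePoints ℝ \ {z}) := fun hmem =>
    ((hPc.mem_extremePoints_iff_mem_sdiff_convexHull_sdiff).1 hz).2
      (convexHull_mono (sdiff_subset_sdiff_left extremePoints_subset) hmem)
  obtain ⟨f, u, hfW, hfz⟩ := geometric_hahn_banach_closed_point (convex_convexHull ℝ _)
    ((hfin.subset sdiff_subset).isCompact_convexHull ℝ).isClosed hzW
  have hlt : ∀ v ∈ P.extremePoints ℝ, v ≠ z → f v < f z := fun v hv hvz =>
    (hfW v (subset_convexHull ℝ _ ⟨hv, hvz⟩)).trans hfz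
  have hexp : IsExposed ℝ P (maxFace P f.toLinearMap) :=
    ContinuousLinearMap.toExposed.isExposed (l := f)
  have hzF : z ∈ maxFace P f.toLinearMap := by
    refine ⟨extremePoints_subset hz, fun y hy => ?_⟩
    rw [← convexHull_extremePoints_of_finite hP hPc hfin] at hy
    refine le_of_mem_convexHull f.toLinearMap (fun v hv => ?_) hy
    rcases eq_or_ne v z with rfl | hvz
    exacts [le_rfl, (hlt v hv hvz).le]
  have hFext : (maxFace P f.toLinearMap).extremePoints ℝ ⊆ {z} := by
    rw [hexp.isExtreme.extremePoints_eq]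
    rintro v ⟨hvF, hvP⟩
    by_contra hvz
    exact (hlt v hvP hvz).not_ge (hvF.2 z hzF.1)
  refine ⟨f.toLinearMap, Subset.antisymm (singleton_subset_iff.2 hzF) ?_⟩
  rw [← convexHull_extremePoints_of_finite (hexp.isCompact hP) (hexp.convex hPc)
    ((finite_singleton z).subset hFext)]
  exact (convexHull_mono hFext).trans (convexHull_singleton z).subset

variable [FiniteDimensional ℝ E]

lemma IsCompact.maxFace_nonempty {P : Set E} (hP : IsCompact P) (hne : P.Nonempty)
    (u : E →ₗ[ℝ] ℝ) : (maxFace P u).Nonempty :=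
  let ⟨x, hx, hmax⟩ := hP.exists_isMaxOn hne u.continuous_of_finiteDimensional.continuousOn
  ⟨x, hx, fun _ hy => hmax hy⟩

lemma isMin_singleton_face {P : Set E} (hP : IsCompact P) (hne : P.Nonempty) {z : E}
    (hz : IsFaceOf P {z}) : IsMin (⟨{z}, hz⟩ : {F : Set E // IsFaceOf P F}) := by
  rintro ⟨F, u, rfl⟩ hF
  exact ((hP.maxFace_nonempty hne u).subset_singleton_iff.1 hF).symm.subset

end Vertices

section Prism

variable {E F : Type*} [AddCommGroup E] [Module ℝ E] [AddCommGroup F] [Module ℝ F]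

lemma maxFace_prod (A : Set E) (C : Set F) (w : E × F →ₗ[ℝ] ℝ) :
    maxFace (A ×ˢ C) w =
      maxFace A (w ∘ₗ LinearMap.inl ℝ E F) ×ˢ maxFace C (w ∘ₗ LinearMap.inr ℝ E F) := by
  have hsplit : ∀ a t, w (a, t) = w (a, 0) + w (0, t) := fun a t => by
    rw [← map_add, Prod.mk_add_mk, add_zero, zero_add]
  ext ⟨a, t⟩
  constructor
  · rintro ⟨⟨haA, htC⟩, hmax⟩
    refine ⟨⟨haA, fun y hy => ?_⟩, ⟨htC, fun s hs => ?_⟩⟩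
    · simp only [LinearMap.comp_apply, LinearMap.inl_apply]
      linarith [hmax (y, t) ⟨hy, htC⟩, hsplit a t, hsplit y t]
    · simp only [LinearMap.comp_apply, LinearMap.inr_apply]
      linarith [hmax (a, s) ⟨haA, hs⟩, hsplit a t, hsplit a s]
  · rintro ⟨⟨haA, hamax⟩, ⟨htC, htmax⟩⟩
    refine ⟨⟨haA, htC⟩, fun ⟨y, s⟩ ⟨hy, hs⟩ => ?_⟩
    simp only [LinearMap.comp_apply, LinearMap.inl_apply, LinearMap.inr_apply] at hamax htmax
    linarith [hamax y hy, htmax s hs, hsplit a t, hsplit y s]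

lemma maxFace_Icc_of_neg (g : ℝ →ₗ[ℝ] ℝ) (hg : g 1 < 0) : maxFace (Icc (0 : ℝ) 1) g = {0} := by
  have hG : ∀ t : ℝ, g t = t * g 1 := fun t => by simpa using g.map_smul t 1
  ext t
  constructor
  · rintro ⟨⟨ht0, -⟩, hmax⟩
    have := hmax 0 ⟨le_rfl, zero_le_one⟩
    rw [hG t, map_zero] at this
    exact le_antisymm (nonpos_of_mul_nonneg_left this hg) ht0
  · rintro rfl
    refine ⟨⟨le_rfl, zero_le_one⟩, fun s hs => ?_⟩
    rw [hG s, map_zero]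
    exact mul_nonpos_of_nonneg_of_nonpos hs.1 hg.le

lemma maxFace_Icc_subset_of_pos (g : ℝ →ₗ[ℝ] ℝ) (hg : 0 < g 1) :
    maxFace (Icc (0 : ℝ) 1) g ⊆ {1} := by
  have hG : ∀ t : ℝ, g t = t * g 1 := fun t => by simpa using g.map_smul t 1
  rintro t ⟨⟨-, ht1⟩, hmax⟩
  have := hmax 1 ⟨zero_le_one, le_rfl⟩
  rw [hG t] at this
  exact le_antisymm ht1 (le_of_mul_le_mul_right (by linarith) hg)

lemma subset_bot_or_top_of_isMin {Q : Set E} {G : Set (E × ℝ)}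
    (hG : IsFaceOf (Q ×ˢ Icc (0 : ℝ) 1) G)
    (hmin : IsMin (⟨G, hG⟩ : {F : Set (E × ℝ) // IsFaceOf (Q ×ˢ Icc (0 : ℝ) 1) F})) :
    G ⊆ Q ×ˢ {0} ∨ G ⊆ Q ×ˢ {1} := by
  obtain ⟨u, rfl⟩ := hG
  have hprod := maxFace_prod Q (Icc (0 : ℝ) 1) u
  set u₁ := u ∘ₗ LinearMap.inl ℝ E ℝ
  set u₂ := u ∘ₗ LinearMap.inr ℝ E ℝ
  rcases lt_trichotomy (u₂ 1) 0 with hneg | hzero | hpos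
  · left
    rw [hprod, maxFace_Icc_of_neg u₂ hneg]
    exact prod_mono (maxFace_subset Q u₁) subset_rfl
  · -- minimality pushes the vertical face `maxFace Q u₁ × [0,1]` down to `maxFace Q u₁ × {0}`
    left
    have hu₂ : u₂ = 0 := LinearMap.ext_ring (by simpa using hzero)
    rw [hu₂, maxFace_zero] at hprod
    have hbot : IsFaceOf (Q ×ˢ Icc (0 : ℝ) 1) (maxFace Q u₁ ×ˢ {0}) := by
      refine ⟨u₁ ∘ₗ LinearMap.fst ℝ E ℝ - LinearMap.snd ℝ E ℝ, ?_⟩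
      rw [maxFace_prod, maxFace_Icc_of_neg _ (by simp)]
      congr 2
      ext; simp [u₁]
    have hle : maxFace (Q ×ˢ Icc (0 : ℝ) 1) u ⊆ maxFace Q u₁ ×ˢ {0} :=
      hmin (b := ⟨_, hbot⟩) (by
        show maxFace Q u₁ ×ˢ {0} ⊆ maxFace _ u
        rw [hprod]
        exact prod_mono subset_rfl (by simp))
    exact hle.trans (prod_mono (maxFace_subset Q u₁) subset_rfl)
  · right
    rw [hprod]
    exact prod_mono (maxFace_subset Q u₁) (maxFace_Icc_subset_of_pos u₂ hpos)

end Prism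

section Cayley

variable {E : Type*} [AddCommGroup E] [Module ℝ E]

structure IsCayleyPolytope (π : E →ₗ[ℝ] ℝ) (β η : ℝ) (P Bot Top : Set E) : Prop where
  finite_bot : Bot.Finite
  finite_top : Top.Finite
  nonempty_bot : Bot.Nonempty
  nonempty_top : Top.Nonempty
  height_pos : 0 < η
  bot_subset : Bot ⊆ {x | π x = β}
  top_subset : Top ⊆ {x | π x = β + η}
  eq_convexHull : P = convexHull ℝ (Bot ∪ Top)

namespace IsCayleyPolytope

variable {π w : E →ₗ[ℝ] ℝ} {β η β' η' : ℝ} {P Bot Top P' Bot' Top' : Set E}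

lemma mem_Icc_of_mem (hC : IsCayleyPolytope π β η P Bot Top) {y : E} (hy : y ∈ P) :
    π y ∈ Icc β (β + η) := by
  rw [hC.eq_convexHull] at hy
  refine convexHull_min (union_subset (fun v hv => ?_) (fun v hv => ?_))
    ((convex_Icc β (β + η)).linear_preimage π) hy
  · have hv : π v = β := hC.bot_subset hv
    simp only [mem_preimage, hv, mem_Icc, le_refl, le_add_iff_nonneg_right, true_and]
    exact hC.height_pos.le
  · have hv : π v = β + η := hC.top_subset hv
    simp only [mem_preimage, hv, mem_Icc, le_refl, le_add_iff_nonneg_right, and_true]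
    exact hC.height_pos.le

lemma mem_Icc_of_mem_add (hC : IsCayleyPolytope π β η P Bot Top)
    (hC' : IsCayleyPolytope π β' η' P' Bot' Top') {x : E} (hx : x ∈ P + P') :
    π x ∈ Icc (β + β') (β + η + (β' + η')) := by
  obtain ⟨p, hp, q, hq, rfl⟩ := hx
  have hp' := hC.mem_Icc_of_mem hp
  have hq' := hC'.mem_Icc_of_mem hq
  rw [map_add]
  exact ⟨add_le_add hp'.1 hq'.1, add_le_add hp'.2 hq'.2⟩

lemma le_of_mem (hC : IsCayleyPolytope π β η P Bot Top) {MB MT : ℝ}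
    (hB : ∀ v ∈ Bot, w v ≤ MB) (hT : ∀ v ∈ Top, w v ≤ MT) {y : E} (hy : y ∈ P) :
    w y ≤ MB + (MT - MB) / η * (π y - β) := by
  set δ := (MT - MB) / η
  have hδ : δ * η = MT - MB := div_mul_cancel₀ _ hC.height_pos.ne'
  rw [hC.eq_convexHull] at hy
  have := le_of_mem_convexHull (w - δ • π) (M := MB - δ * β) (fun v hv => ?_) hy
  · simp only [LinearMap.sub_apply, LinearMap.smul_apply, smul_eq_mul] at this
    linear_combination this
  rcases hv with hv | hv
  · have hπ : π v = β := hC.bot_subset hv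
    simp only [LinearMap.sub_apply, LinearMap.smul_apply, smul_eq_mul, hπ]
    linear_combination hB v hv
  · have hπ : π v = β + η := hC.top_subset hv
    simp only [LinearMap.sub_apply, LinearMap.smul_apply, smul_eq_mul, hπ]
    linear_combination hT v hv - hδ

lemma maxFace_add_smul_eq (hC : IsCayleyPolytope π β η P Bot Top) {aB cT : E}
    (hmB : ∀ v ∈ Bot, w v ≤ w aB) (hcT : cT ∈ Top) (hmT : ∀ v ∈ Top, w v ≤ w cT) {r : ℝ}
    (hr : 0 < r + (w cT - w aB) / η) :
    maxFace P (w + r • π) = {x ∈ P | π x = β + η ∧ w x = w cT} := by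
  set δ := (w cT - w aB) / η
  have hδ : δ * η = w cT - w aB := div_mul_cancel₀ _ hC.height_pos.ne'
  have hπc : π cT = β + η := hC.top_subset hcT
  have hcP : cT ∈ P := hC.eq_convexHull ▸ subset_convexHull ℝ _ (Or.inr hcT)
  have hbound : ∀ y ∈ P, w y + r * π y + (r + δ) * (β + η - π y) ≤ w cT + r * π cT := by
    intro y hy
    rw [hπc]
    linear_combination hC.le_of_mem hmB hmT hy + hδ
  ext x
  simp only [maxFace, LinearMap.add_apply, LinearMap.smul_apply, smul_eq_mul, mem_ofPred_eq]
  constructor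
  · rintro ⟨hx, hmax⟩
    have hπx : π x = β + η := by
      have := hbound x hx
      have := hmax cT hcP
      nlinarith [(hC.mem_Icc_of_mem hx).2]
    refine ⟨hx, hπx, le_antisymm ?_ ?_⟩
    · have := hbound x hx
      rw [hπx, hπc] at this
      linarith
    · have := hmax cT hcP
      rw [hπx, hπc] at this
      linarith
  · rintro ⟨hx, hπx, hwx⟩
    refine ⟨hx, fun y hy => ?_⟩
    rw [hπx, hwx, ← hπc]
    nlinarith [hbound y hy, (hC.mem_Icc_of_mem hy).2]

lemma mem_maxFace_add_smul (hC : IsCayleyPolytope π β η P Bot Top) {aB cT : E} (haB : aB ∈ Bot)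
    (hmB : ∀ v ∈ Bot, w v ≤ w aB) (hmT : ∀ v ∈ Top, w v ≤ w cT) {r : ℝ}
    (hr : r + (w cT - w aB) / η ≤ 0) : aB ∈ maxFace P (w + r • π) := by
  refine ⟨hC.eq_convexHull ▸ subset_convexHull ℝ _ (Or.inl haB), fun y hy => ?_⟩
  have hπa : π aB = β := hC.bot_subset haB
  simp only [LinearMap.add_apply, LinearMap.smul_apply, smul_eq_mul, hπa]
  nlinarith [hC.le_of_mem hmB hmT hy, (hC.mem_Icc_of_mem hy).1]

lemma slope_le (hC : IsCayleyPolytope π β η P Bot Top) (hC' : IsCayleyPolytope π β' η' P' Bot' Top')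
    (hME : MinkowskiEquivalent P P') {aB cT aB' cT' : E}
    (hmB : ∀ v ∈ Bot, w v ≤ w aB) (hcT : cT ∈ Top) (hmT : ∀ v ∈ Top, w v ≤ w cT)
    (haB' : aB' ∈ Bot') (hmB' : ∀ v ∈ Bot', w v ≤ w aB') (hcT' : cT' ∈ Top')
    (hmT' : ∀ v ∈ Top', w v ≤ w cT') :
    (w cT - w aB) / η ≤ (w cT' - w aB') / η' := by
  by_contra! hlt
  -- `r₁ = -δ'` and `r₂ = 1 - δ'` select the same face of `P` but different faces of `P'`
  set δ' := (w cT' - w aB') / η'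
  have hP : maxFace P (w + (-δ') • π) = maxFace P (w + (1 - δ') • π) := by
    rw [hC.maxFace_add_smul_eq hmB hcT hmT (by linarith),
      hC.maxFace_add_smul_eq hmB hcT hmT (by linarith)]
  have hmem := hC'.mem_maxFace_add_smul haB' hmB' hmT' (r := -δ') (by linarith)
  rw [(hME _ _).1 hP, hC'.maxFace_add_smul_eq hmB' hcT' hmT' (by linarith)] at hmem
  have hπa : π aB' = β' := hC'.bot_subset haB'
  linarith [hmem.2.1, hC'.height_pos]

lemma slope_eq (hC : IsCayleyPolytope π β η P Bot Top) (hC' : IsCayleyPolytope π β' η' P' Bot' Top')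
    (hME : MinkowskiEquivalent P P') {aB cT aB' cT' : E}
    (haB : aB ∈ Bot) (hmB : ∀ v ∈ Bot, w v ≤ w aB) (hcT : cT ∈ Top) (hmT : ∀ v ∈ Top, w v ≤ w cT)
    (haB' : aB' ∈ Bot') (hmB' : ∀ v ∈ Bot', w v ≤ w aB') (hcT' : cT' ∈ Top')
    (hmT' : ∀ v ∈ Top', w v ≤ w cT') :
    (w cT - w aB) / η = (w cT' - w aB') / η' :=
  le_antisymm (hC.slope_le hC' hME hmB hcT hmT haB' hmB' hcT' hmT')
    (hC'.slope_le hC hME.symm hmB' hcT' hmT' haB hmB hcT hmT)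

lemma slice_subset (hC : IsCayleyPolytope π β η P Bot Top) {t : ℝ} (ht : t ∈ Icc (0 : ℝ) 1) :
    (1 - t) • convexHull ℝ Bot + t • convexHull ℝ Top ⊆ P ∩ {x | π x = β + t * η} := by
  rintro _ ⟨_, ⟨p, hp, rfl⟩, _, ⟨q, hq, rfl⟩, rfl⟩
  have hπp : π p = β := convexHull_min hC.bot_subset (convex_hyperplane π.isLinear β) hp
  have hπq : π q = β + η := convexHull_min hC.top_subset (convex_hyperplane π.isLinear _) hq
  refine ⟨?_, ?_⟩
  · rw [hC.eq_convexHull]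
    exact convex_convexHull ℝ _ (convexHull_mono subset_union_left hp)
      (convexHull_mono subset_union_right hq) (by linarith [ht.2]) ht.1 (by ring)
  · simp only [mem_ofPred_eq, map_add, map_smul, smul_eq_mul, hπp, hπq]
    ring

lemma apply_add_apply_le (hC : IsCayleyPolytope π β η P Bot Top)
    (hC' : IsCayleyPolytope π β' η' P' Bot' Top') (hME : MinkowskiEquivalent P P')
    {aB cT aB' cT' : E}
    (haB : aB ∈ Bot) (hmB : ∀ v ∈ Bot, w v ≤ w aB) (hcT : cT ∈ Top) (hmT : ∀ v ∈ Top, w v ≤ w cT)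
    (haB' : aB' ∈ Bot') (hmB' : ∀ v ∈ Bot', w v ≤ w aB') (hcT' : cT' ∈ Top')
    (hmT' : ∀ v ∈ Top', w v ≤ w cT') {p q : E} (hp : p ∈ P) (hq : q ∈ P') {t t' : ℝ}
    (hpq : π p + π q = β + β' + t * η + t' * η') :
    w p + w q ≤ (1 - t) * w aB + t * w cT + ((1 - t') * w aB' + t' * w cT') := by
  have hδ := hC.slope_eq hC' hME haB hmB hcT hmT haB' hmB' hcT' hmT'
  have hp' := hC.le_of_mem hmB hmT hp
  have hq' := hC'.le_of_mem hmB' hmT' hq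
  have hδη : (w cT - w aB) / η * η = w cT - w aB := div_mul_cancel₀ _ hC.height_pos.ne'
  have hδη' : (w cT' - w aB') / η' * η' = w cT' - w aB' := div_mul_cancel₀ _ hC'.height_pos.ne'
  rw [← hδ] at hq' hδη'
  linear_combination hp' + hq' + (w cT - w aB) / η * hpq + t * hδη + t' * hδη'

end IsCayleyPolytope

end Cayley

section Slices

variable {E : Type*} [NormedAddCommGroup E] [NormedSpace ℝ E]
  {π : E →ₗ[ℝ] ℝ} {β η β' η' : ℝ} {P Bot Top P' Bot' Top' : Set E}

lemma IsCayleyPolytope.mem_add_slices (hC : IsCayleyPolytope π β η P Bot Top)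
    (hC' : IsCayleyPolytope π β' η' P' Bot' Top') (hME : MinkowskiEquivalent P P') {x : E}
    (hx : x ∈ P + P') {s s' : ℝ} (hs : s ∈ Icc 0 η) (hs' : s' ∈ Icc 0 η')
    (hxh : π x = β + β' + s + s') :
    x ∈ (P ∩ {y | π y = β + s}) + (P' ∩ {y | π y = β' + s'}) := by
  set t := s / η
  set t' := s' / η'
  have hst : s = t * η := (div_mul_cancel₀ _ hC.height_pos.ne').symm
  have hst' : s' = t' * η' := (div_mul_cancel₀ _ hC'.height_pos.ne').symm
  have ht : t ∈ Icc (0 : ℝ) 1 :=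
    ⟨div_nonneg hs.1 hC.height_pos.le, div_le_one_of_le₀ hs.2 hC.height_pos.le⟩
  have ht' : t' ∈ Icc (0 : ℝ) 1 :=
    ⟨div_nonneg hs'.1 hC'.height_pos.le, div_le_one_of_le₀ hs'.2 hC'.height_pos.le⟩
  rw [hst, hst'] at hxh ⊢
  refine add_subset_add (hC.slice_subset ht) (hC'.slice_subset ht')
    ((iInter_halfSpaces_eq ?_ ?_).subset (mem_iInter.2 fun f => ?_))
  · exact (((convex_convexHull ℝ _).smul _).add ((convex_convexHull ℝ _).smul _)).add
      (((convex_convexHull ℝ _).smul _).add ((convex_convexHull ℝ _).smul _))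
  · exact ((((hC.finite_bot.isCompact_convexHull ℝ).smul _).add
      ((hC.finite_top.isCompact_convexHull ℝ).smul _)).add
      (((hC'.finite_bot.isCompact_convexHull ℝ).smul _).add
      ((hC'.finite_top.isCompact_convexHull ℝ).smul _))).isClosed
  obtain ⟨aB, haB, hmB⟩ := exists_max_image Bot f hC.finite_bot hC.nonempty_bot
  obtain ⟨cT, hcT, hmT⟩ := exists_max_image Top f hC.finite_top hC.nonempty_top
  obtain ⟨aB', haB', hmB'⟩ := exists_max_image Bot' f hC'.finite_bot hC'.nonempty_bot
  obtain ⟨cT', hcT', hmT'⟩ := exists_max_image Top' f hC'.finite_top hC'.nonempty_top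
  obtain ⟨p, hp, q, hq, rfl⟩ := hx
  refine ⟨((1 - t) • aB + t • cT) + ((1 - t') • aB' + t' • cT'),
    add_mem_add
      (add_mem_add (smul_mem_smul_set (subset_convexHull ℝ _ haB))
        (smul_mem_smul_set (subset_convexHull ℝ _ hcT)))
      (add_mem_add (smul_mem_smul_set (subset_convexHull ℝ _ haB'))
        (smul_mem_smul_set (subset_convexHull ℝ _ hcT'))), ?_⟩
  rw [map_add] at hxh
  simpa using hC.apply_add_apply_le hC' hME (w := f.toLinearMap) haB hmB hcT hmT haB' hmB' hcT'
    hmT' hp hq hxh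

end Slices

section Prismatoid

variable {d : ℕ}

lemma dimSet_lt_of_subset_coord_eq {S : Set (Fin d → ℝ)} (e : Fin d) {r : ℝ}
    (h : S ⊆ {x | x e = r}) : dimSet S < d := by
  set π := LinearMap.proj (R := ℝ) (φ := fun _ : Fin d => ℝ) e
  have hspan : vectorSpan ℝ S ≤ LinearMap.ker π := by
    refine Submodule.span_le.2 ?_
    rintro _ ⟨x, hx, y, hy, rfl⟩
    have hxy : x e = y e := (h hx).trans (h hy).symm
    simp [π, hxy]
  have hker : LinearMap.ker π ≠ ⊤ := fun htop => by
    simpa [π] using LinearMap.ext_iff.1 (LinearMap.ker_eq_top.1 htop) (Pi.single e 1)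
  calc dimSet S = Module.finrank ℝ (vectorSpan ℝ S) := by rw [dimSet, direction_affineSpan]
    _ ≤ Module.finrank ℝ (LinearMap.ker π) := Submodule.finrank_mono hspan
    _ < Module.finrank ℝ (Fin d → ℝ) := Submodule.finrank_lt hker
    _ = d := by simp

lemma IsPrismatoid.extremePoints_subset {P T B : Set (Fin d → ℝ)} (hP : IsPrismatoid d P T B)
    (hne : P.Nonempty) : P.extremePoints ℝ ⊆ T ∪ B := by
  obtain ⟨⟨V, -, rfl⟩, -, Q, -, -, φ, ⟨hT, hφT⟩, ⟨hB, hφB⟩, -⟩ := hP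
  intro z hz
  have hcomp := V.finite_toSet.isCompact_convexHull ℝ
  have hz' := isFaceOf_singleton_of_mem_extremePoints hcomp (convex_convexHull ℝ _)
    (V.finite_toSet.subset extremePoints_convexHull_subset) hz
  set G := φ.symm ⟨{z}, hz'⟩
  have hGmin : IsMin G :=
    (φ.symm.toInitialSeg.isMin_apply_iff).2 (isMin_singleton_face hcomp hne hz')
  have hφG : φ G = ⟨{z}, hz'⟩ := φ.apply_symm_apply _
  rcases subset_bot_or_top_of_isMin G.2 hGmin with hbot | htop
  · have : φ G ≤ φ ⟨_, hB⟩ := φ.monotone hbot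
    rw [hφG] at this
    exact Or.inr (hφB ▸ this rfl)
  · have : φ G ≤ φ ⟨_, hT⟩ := φ.monotone htop
    rw [hφG] at this
    exact Or.inl (hφT ▸ this rfl)

lemma IsPrismatoid.exists_isCayleyPolytope {P T B : Set (Fin d → ℝ)} (hP : IsPrismatoid d P T B)
    (e : Fin d) {β η : ℝ} (hη : 0 ≤ η) (hB : B ⊆ {x | x e = β}) (hT : T ⊆ {x | x e = β + η}) :
    ∃ Bot Top, IsCayleyPolytope (LinearMap.proj e) β η P Bot Top := by
  have hflat : ∀ r, ¬ P ⊆ {x | x e = r} := fun r h =>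
    (dimSet_lt_of_subset_coord_eq e h).ne hP.2.1
  have hne : P.Nonempty := nonempty_iff_ne_empty.2 fun h => hflat 0 (h ▸ empty_subset _)
  obtain ⟨V, -, hPV⟩ := hP.1
  have hcomp : IsCompact P := hPV ▸ V.finite_toSet.isCompact_convexHull ℝ
  have hfin : (P.extremePoints ℝ).Finite :=
    hPV ▸ V.finite_toSet.subset extremePoints_convexHull_subset
  have hPE : convexHull ℝ (P.extremePoints ℝ) = P :=
    convexHull_extremePoints_of_finite hcomp (hPV ▸ convex_convexHull ℝ _) hfin
  have hsplit : P.extremePoints ℝ ∩ B ∪ P.extremePoints ℝ ∩ T = P.extremePoints ℝ := by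
    rw [← inter_union_distrib_left, union_comm]
    exact inter_eq_left.2 (hP.extremePoints_subset hne)
  have hflat' : ∀ r, ¬ P.extremePoints ℝ ∩ B ∪ P.extremePoints ℝ ∩ T ⊆ {x | x e = r} :=
    fun r h => hflat r (by
      rw [← hPE, ← hsplit]
      exact convexHull_min h (convex_hyperplane (f := fun x : Fin d → ℝ => x e)
        (LinearMap.proj (R := ℝ) e).isLinear r))
  refine ⟨P.extremePoints ℝ ∩ B, P.extremePoints ℝ ∩ T,
    { finite_bot := hfin.subset inter_subset_left
      finite_top := hfin.subset inter_subset_left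
      nonempty_bot := ?_
      nonempty_top := ?_
      height_pos := ?_
      bot_subset := fun v hv => hB hv.2
      top_subset := fun v hv => hT hv.2
      eq_convexHull := by rw [hsplit, hPE] }⟩
  · refine nonempty_iff_ne_empty.2 fun h => hflat' (β + η) ?_
    rw [h, empty_union]
    exact fun v hv => hT hv.2
  · refine nonempty_iff_ne_empty.2 fun h => hflat' β ?_
    rw [h, union_empty]
    exact fun v hv => hB hv.2
  · refine hη.lt_of_ne fun h => hflat' β (union_subset (fun v hv => hB hv.2) fun v hv => ?_)
    simpa [← h] using hT hv.2

end Prismatoid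

theorem slices_IDP_implies_prismatoids_IDP_general
    (d : ℕ) (hd : 0 < d)
    (P T B P' T' B' : Set (Fin d → ℝ))
    (hP : IsPrismatoid d P T B) (hP' : IsPrismatoid d P' T' B')
    (hME : MinkowskiEquivalent P P')
    (b h b' h' : ℤ) (hh : 0 ≤ h) (hh' : 0 ≤ h')
    (hB : B ⊆ {x : Fin d → ℝ | x (lastIdx d hd) = (b : ℝ)})
    (hT : T ⊆ {x : Fin d → ℝ | x (lastIdx d hd) = ((b + h : ℤ) : ℝ)})
    (hB' : B' ⊆ {x : Fin d → ℝ | x (lastIdx d hd) = (b' : ℝ)})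
    (hT' : T' ⊆ {x : Fin d → ℝ | x (lastIdx d hd) = ((b' + h' : ℤ) : ℝ)})
    (hslices : ∀ l m : ℤ, 0 ≤ l → l ≤ h → 0 ≤ m → m ≤ h' →
      IsIDPPair (P ∩ {x : Fin d → ℝ | x (lastIdx d hd) = ((b + l : ℤ) : ℝ)})
                (P' ∩ {x : Fin d → ℝ | x (lastIdx d hd) = ((b' + m : ℤ) : ℝ)})) :
    IsIDPPair P P' := by
  set e := lastIdx d hd
  obtain ⟨Bot, Top, hC⟩ := hP.exists_isCayleyPolytope e (Int.cast_nonneg hh) hB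
    (by simpa only [Int.cast_add] using hT)
  obtain ⟨Bot', Top', hC'⟩ := hP'.exists_isCayleyPolytope e (Int.cast_nonneg hh') hB'
    (by simpa only [Int.cast_add] using hT')
  intro x hx hxPP'
  obtain ⟨c, hc⟩ := hx e
  have hcI := hC.mem_Icc_of_mem_add hC' hxPP'
  rw [LinearMap.proj_apply, hc] at hcI
  obtain ⟨l, m, hl0, hlh, hm0, hmh', rfl⟩ :
      ∃ l m : ℤ, 0 ≤ l ∧ l ≤ h ∧ 0 ≤ m ∧ m ≤ h' ∧ c = b + b' + l + m := by
    have hlo : b + b' ≤ c := by exact_mod_cast hcI.1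
    have hhi : c ≤ b + h + (b' + h') := by exact_mod_cast hcI.2
    exact ⟨min (c - b - b') h, c - b - b' - min (c - b - b') h, by omega, by omega, by omega,
      by omega, by omega⟩
  have hxlm := hC.mem_add_slices hC' hME hxPP' (s := l) (s' := m)
    ⟨Int.cast_nonneg hl0, Int.cast_le.2 hlh⟩ ⟨Int.cast_nonneg hm0, Int.cast_le.2 hmh'⟩
    (by simp [hc])
  obtain ⟨p, hp, q, hq, hpl, hql, hpq⟩ := hslices l m hl0 hlh hm0 hmh' x hx (by simpa using hxlm)
  exact ⟨p, hp.1, q, hq.1, hpl, hql, hpq⟩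

/-- For Minkowski equivalent smooth `d`-dimensional prismatoids `P` and `P'`
(tops and bottoms parallel to `{x : x_d = 0}`, bottoms at heights `b`, `b'` and tops at
heights `b + h`, `b' + h'`), if every pair of slices `(S_l, S'_m)` is IDP, then `(P, P')`
is IDP. -/
theorem slices_IDP_implies_prismatoids_IDP
    (d : ℕ) (hd : 0 < d)
    (P T B P' T' B' : Set (Fin d → ℝ))
    (hP : IsPrismatoid d P T B) (hP' : IsPrismatoid d P' T' B')
    (hsmooth : IsSmoothPolytope P) (hsmooth' : IsSmoothPolytope P')
    (hME : MinkowskiEquivalent P P')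
    (hTpar : AreParallel T {x : Fin d → ℝ | x (lastIdx d hd) = 0})
    (hBpar : AreParallel B {x : Fin d → ℝ | x (lastIdx d hd) = 0})
    (hT'par : AreParallel T' {x : Fin d → ℝ | x (lastIdx d hd) = 0})
    (hB'par : AreParallel B' {x : Fin d → ℝ | x (lastIdx d hd) = 0})
    (b h b' h' : ℤ) (hh : 0 ≤ h) (hh' : 0 ≤ h')
    (hB : B ⊆ {x : Fin d → ℝ | x (lastIdx d hd) = (b : ℝ)})
    (hT : T ⊆ {x : Fin d → ℝ | x (lastIdx d hd) = ((b + h : ℤ) : ℝ)})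
    (hB' : B' ⊆ {x : Fin d → ℝ | x (lastIdx d hd) = (b' : ℝ)})
    (hT' : T' ⊆ {x : Fin d → ℝ | x (lastIdx d hd) = ((b' + h' : ℤ) : ℝ)})
    (hslices : ∀ l m : ℤ, 0 ≤ l → l ≤ h → 0 ≤ m → m ≤ h' →
      IsIDPPair (P ∩ {x : Fin d → ℝ | x (lastIdx d hd) = ((b + l : ℤ) : ℝ)})
                (P' ∩ {x : Fin d → ℝ | x (lastIdx d hd) = ((b' + m : ℤ) : ℝ)})) :
    IsIDPPair P P' :=
  slices_IDP_implies_prismatoids_IDP_general d hd P T B P' T' B' hP hP' hME b h b' h' hh hh' hB hT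
    hB' hT' hslices
end
end

section
/- Let C be a d-dimensional smooth combinatorial cube in ℝ^d with d ≥ 3, and fix distinct x, y ∈ {1,…,d}. Consider the four (d−2)-dimensional faces F_{xy}, F_{x ȳ}, F_{x̄ y}, F_{x̄ ȳ} of C. If three of these faces are pairwise parallel to each other, then all four are pairwise parallel. -/
open Pointwise

noncomputable section

/-!
The face `F_{x^a y^b}` lies in the facets `P_a` (where `x` is pinned to `a`) and `Q_b` (where `y`
is pinned to `b`). The dimension is strictly monotone on nonempty faces, and pinning one more
coordinate gives a strictly smaller face of the cube, so along a chain of `d` pinnings every step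
lowers the dimension by exactly one: the facets have dimension `d - 1`, the four faces `d - 2`.
The directions of the affine spans of `P_a` and `Q_b` are distinct hyperplanes, so a
`(d - 2)`-dimensional set inside both has their intersection as its direction. If `F_{x^a' y^b'}`
is parallel to `F_{x^a y^b'} ⊆ P_a` and to `F_{x^a' y^b} ⊆ Q_b`, then its direction lies in that
intersection too, hence it is parallel to `F_{x^a y^b}`: any three of the four faces determine
the direction of the fourth.
-/

section Faces

variable {E : Type*} [AddCommGroup E] [Module ℝ E]

theorem IsFaceOf.subset {P F : Set E} (hF : IsFaceOf P F) : F ⊆ P := by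
  obtain ⟨u, rfl⟩ := hF
  exact fun _ hz => hz.1

theorem isFaceOf_self (P : Set E) : IsFaceOf P P :=
  ⟨0, by ext; simp [maxFace]⟩

theorem maxFace_eq_of_forall_le {P : Set E} {u : E →ₗ[ℝ] ℝ} {M : ℝ}
    (hle : ∀ z ∈ P, u z ≤ M) (hM : ∃ z ∈ P, u z = M) :
    maxFace P u = {z ∈ P | u z = M} := by
  obtain ⟨z₀, hz₀, rfl⟩ := hM
  ext z
  exact ⟨fun hz => ⟨hz.1, le_antisymm (hle z hz.1) (hz.2 z₀ hz₀)⟩,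
    fun hz => ⟨hz.1, fun y hy => hz.2 ▸ hle y hy⟩⟩

theorem IsFaceOf.nonempty {P F : Set E} (hP : IsPolytope P) (hne : P.Nonempty)
    (hF : IsFaceOf P F) : F.Nonempty := by
  obtain ⟨V, rfl⟩ := hP
  obtain ⟨u, rfl⟩ := hF
  obtain ⟨v, hv, hmax⟩ := V.exists_max_image u (by simpa using hne)
  exact ⟨v, subset_convexHull ℝ _ hv, fun z hz =>
    convexHull_min hmax (convex_halfSpace_le u.isLinear (u v)) hz⟩

theorem IsFaceOf.subset_of_subset_affineSpan {P F Q : Set E} (hF : IsFaceOf P F)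
    (hFne : F.Nonempty) (hQP : Q ⊆ P) (hQF : Q ⊆ affineSpan ℝ F) : Q ⊆ F := by
  obtain ⟨u, rfl⟩ := hF
  obtain ⟨p, hp⟩ := hFne
  have hspan : affineSpan ℝ (maxFace P u) ≤ AffineSubspace.mk' p (LinearMap.ker u) :=
    affineSpan_le.mpr fun z hz => by
      simp [AffineSubspace.mem_mk', le_antisymm (hp.2 z hz.1) (hz.2 p hp.1)]
  intro q hq
  have hqp : u q = u p := by
    simpa [AffineSubspace.mem_mk', sub_eq_zero] using hspan (hQF hq)
  exact ⟨hQP hq, fun z hz => hqp ▸ hp.2 z hz⟩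

theorem AreParallel.symm {F G : Set E} (h : AreParallel F G) : AreParallel G F :=
  Eq.symm h

theorem AreParallel.trans {F G H : Set E} (h₁ : AreParallel F G) (h₂ : AreParallel G H) :
    AreParallel F H :=
  Eq.trans h₁ h₂

theorem AreParallel.pairwise {A B C D : Set E} (hB : AreParallel A B) (hC : AreParallel A C)
    (hD : AreParallel A D) :
    AreParallel A B ∧ AreParallel A C ∧ AreParallel A D ∧
    AreParallel B C ∧ AreParallel B D ∧ AreParallel C D :=
  ⟨hB, hC, hD, hB.symm.trans hC, hB.symm.trans hD, hC.symm.trans hD⟩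

theorem nonempty_of_dimSet_pos {F : Set E} (h : 0 < dimSet F) : F.Nonempty := by
  rw [Set.nonempty_iff_ne_empty]
  rintro rfl
  rw [dimSet, AffineSubspace.span_empty, AffineSubspace.direction_bot, finrank_bot] at h
  exact h.false

variable [FiniteDimensional ℝ E]

theorem IsFaceOf.dimSet_lt {P F G : Set E} (hF : IsFaceOf P F) (hFne : F.Nonempty)
    (hGP : G ⊆ P) (hFG : F ⊂ G) : dimSet F < dimSet G := by
  obtain ⟨p, hp⟩ := hFne
  by_contra! hle
  have hdir : (affineSpan ℝ F).direction = (affineSpan ℝ G).direction :=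
    Submodule.eq_of_le_of_finrank_le (AffineSubspace.direction_le (affineSpan_mono ℝ hFG.1)) hle
  have hspan : affineSpan ℝ F = affineSpan ℝ G := AffineSubspace.ext_of_direction_eq hdir
    ⟨p, subset_affineSpan ℝ F hp, subset_affineSpan ℝ G (hFG.1 hp)⟩
  exact hFG.2 (hF.subset_of_subset_affineSpan ⟨p, hp⟩ hGP (hspan ▸ subset_affineSpan ℝ G))

theorem areParallel_of_subset_inter {C P Q G G₁ G₂ H : Set E}
    (hQ : IsFaceOf C Q) (hPC : P ⊆ C) (hPQ : ¬ P ⊆ Q) (hdimP : dimSet P = dimSet G + 1)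
    (hG₁ : G₁ ⊆ P) (hG₂ : G₂ ⊆ Q) (hHP : H ⊆ P) (hHQ : H ⊆ Q) (hH : H.Nonempty)
    (hdimH : dimSet H = dimSet G) (h₁ : AreParallel G G₁) (h₂ : AreParallel G G₂) :
    AreParallel G H := by
  obtain ⟨p, hp⟩ := hH
  have dir_le {A B : Set E} (h : A ⊆ B) :
      (affineSpan ℝ A).direction ≤ (affineSpan ℝ B).direction :=
    AffineSubspace.direction_le (affineSpan_mono ℝ h)
  set V := (affineSpan ℝ P).direction
  set W := (affineSpan ℝ Q).direction
  have hVW : ¬ V ≤ W := fun hVW => hPQ <| hQ.subset_of_subset_affineSpan ⟨p, hHQ hp⟩ hPC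
    fun q hq => by
      simpa using AffineSubspace.vadd_mem_of_mem_direction
        (hVW (AffineSubspace.vsub_mem_direction (subset_affineSpan ℝ P hq)
          (subset_affineSpan ℝ P (hHP hp))))
        (subset_affineSpan ℝ Q (hHQ hp))
  -- `V ⊓ W` is a proper subspace of `V`, so it is no larger than `G` and `H`, which it contains
  have hrank : Module.finrank ℝ ↥(V ⊓ W) ≤ dimSet G := by
    have : Module.finrank ℝ ↥(V ⊓ W) < dimSet P :=
      Submodule.finrank_lt_finrank_of_lt (inf_lt_left.mpr hVW)
    omega
  have hG : (affineSpan ℝ G).direction = V ⊓ W :=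
    Submodule.eq_of_le_of_finrank_le (le_inf (h₁ ▸ dir_le hG₁) (h₂ ▸ dir_le hG₂)) hrank
  have hH : (affineSpan ℝ H).direction = V ⊓ W :=
    Submodule.eq_of_le_of_finrank_le (le_inf (dir_le hHP) (dir_le hHQ))
      (hrank.trans_eq hdimH.symm)
  exact hG.trans hH.symm

end Faces

theorem StrictAnti.add_card_sdiff_le {α : Type*} [DecidableEq α] {f : Finset α → ℕ}
    (hf : StrictAnti f) {s t : Finset α} (hst : s ⊆ t) : f t + (t \ s).card ≤ f s := by
  suffices ∀ u : Finset α, Disjoint s u → f (s ∪ u) + u.card ≤ f s by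
    simpa [Finset.union_sdiff_of_subset hst] using this (t \ s) Finset.disjoint_sdiff
  intro u
  induction u using Finset.induction_on with
  | empty => simp
  | insert a u ha ih =>
    intro hsu
    have has : a ∉ s ∪ u := by
      simpa [ha] using Finset.disjoint_right.mp hsu (Finset.mem_insert_self a u)
    have hlt : f (s ∪ insert a u) < f (s ∪ u) := hf <| by
      rw [Finset.union_insert]
      exact Finset.ssubset_insert has
    have := ih (hsu.mono_right (Finset.subset_insert a u))
    rw [Finset.card_insert_of_notMem ha]
    omega

section UnitCube

variable {d : ℕ}

def pinnedCubeFace (s : Fin d → Bool) (T : Finset (Fin d)) : Set (Fin d → ℝ) :=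
  {z ∈ unitCube d | ∀ k ∈ T, z k = (s k).toNat}

theorem pinnedCubeFace_empty (s : Fin d → Bool) : pinnedCubeFace s ∅ = unitCube d := by
  simp [pinnedCubeFace]

theorem pinnedCubeFace_subset_pinnedCubeFace {s t : Fin d → Bool} {T T' : Finset (Fin d)}
    (hT : T ⊆ T') (hts : ∀ k ∈ T, t k = s k) : pinnedCubeFace t T' ⊆ pinnedCubeFace s T :=
  fun _ ⟨hz, hpin⟩ => ⟨hz, fun k hk => by rw [hpin k (hT hk), hts k hk]⟩

theorem Bool.toNat_cast_inj {a b : Bool} : (a.toNat : ℝ) = b.toNat ↔ a = b := by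
  cases a <;> cases b <;> simp

theorem toNat_mem_unitCube (u : Fin d → Bool) : (fun k => ((u k).toNat : ℝ)) ∈ unitCube d :=
  fun k => ⟨by positivity, Nat.cast_le_one.mpr (Bool.toNat_le (u k))⟩

theorem toNat_mem_pinnedCubeFace_iff {u s : Fin d → Bool} {T : Finset (Fin d)} :
    (fun k => ((u k).toNat : ℝ)) ∈ pinnedCubeFace s T ↔ ∀ k ∈ T, u k = s k :=
  and_iff_right_of_imp (fun _ => toNat_mem_unitCube u) |>.trans <|
    forall₂_congr fun _ _ => Bool.toNat_cast_inj

theorem subset_of_pinnedCubeFace_subset {s t : Fin d → Bool} {T T' : Finset (Fin d)}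
    (h : pinnedCubeFace t T ⊆ pinnedCubeFace s T') : T' ⊆ T := by
  intro k hk
  by_contra hkT
  have hmem := toNat_mem_pinnedCubeFace_iff.mp
    (h (toNat_mem_pinnedCubeFace_iff (u := fun i => if i ∈ T then t i else !s i).mpr
      fun i hi => by simp [hi])) k hk
  simp [hkT] at hmem

theorem pinnedCubeFace_ssubset {s : Fin d → Bool} {T T' : Finset (Fin d)} (h : T ⊂ T') :
    pinnedCubeFace s T' ⊂ pinnedCubeFace s T :=
  ⟨pinnedCubeFace_subset_pinnedCubeFace h.1 fun _ _ => rfl,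
    fun h' => h.2 (subset_of_pinnedCubeFace_subset h')⟩

theorem isFaceOf_pinnedCubeFace (s : Fin d → Bool) (T : Finset (Fin d)) :
    IsFaceOf (unitCube d) (pinnedCubeFace s T) := by
  have hterm : ∀ (b : Bool) {t : ℝ}, t ∈ Set.Icc 0 1 → (if b then 1 else -1) * t ≤ b.toNat := by
    rintro (_ | _) t ⟨h₀, h₁⟩ <;> simp <;> linarith
  have heq : ∀ (b : Bool) (t : ℝ), (if b then 1 else -1) * t = b.toNat ↔ t = b.toNat := by
    rintro (_ | _) t <;> simp [neg_eq_zero]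
  set u : (Fin d → ℝ) →ₗ[ℝ] ℝ := ∑ k ∈ T, (if s k then 1 else -1 : ℝ) • LinearMap.proj k
  have hu : ∀ z, u z = ∑ k ∈ T, (if s k then 1 else -1) * z k := fun z => by
    simp only [u, LinearMap.coe_sum, Finset.sum_apply, LinearMap.smul_apply,
      LinearMap.coe_proj, Function.eval, smul_eq_mul]
  refine ⟨u, ?_⟩
  rw [maxFace_eq_of_forall_le (M := ∑ k ∈ T, ((s k).toNat : ℝ))
    (fun z hz => hu z ▸ Finset.sum_le_sum fun k _ => hterm (s k) (hz k))
    ⟨_, toNat_mem_unitCube s, hu _ ▸ Finset.sum_congr rfl fun k _ => (heq _ _).mpr rfl⟩]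
  ext z
  refine and_congr_right fun hz => ?_
  rw [hu, Finset.sum_eq_sum_iff_of_le fun k _ => hterm (s k) (hz k)]
  simp only [heq]

theorem cubeFace_eq_pinnedCubeFace {I J : Set (Fin d)} {s : Fin d → Bool} {T : Finset (Fin d)}
    (hT : (T : Set (Fin d)) = I ∪ J) (hI : ∀ k ∈ I, s k = false) (hJ : ∀ k ∈ J, s k = true) :
    cubeFace d I J = pinnedCubeFace s T := by
  ext z
  simp only [cubeFace, pinnedCubeFace, Set.mem_ofPred_eq, ← Finset.mem_coe, hT, Set.mem_union]
  refine and_congr_right fun _ => ⟨?_, fun h => ⟨fun k hk => ?_, fun k hk => ?_⟩⟩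
  · rintro ⟨h0, h1⟩ k (hk | hk)
    · simp [h0 k hk, hI k hk]
    · simp [h1 k hk, hJ k hk]
  · simpa [hI k hk] using h k (Or.inl hk)
  · simpa [hJ k hk] using h k (Or.inr hk)

end UnitCube

section CombinatorialCube

variable {d : ℕ} {C : Set (Fin d → ℝ)}
  (φ : {F : Set (Fin d → ℝ) // IsFaceOf (unitCube d) F} ≃o {F : Set (Fin d → ℝ) // IsFaceOf C F})

def pinnedFace (s : Fin d → Bool) (T : Finset (Fin d)) : Set (Fin d → ℝ) :=
  (φ ⟨pinnedCubeFace s T, isFaceOf_pinnedCubeFace s T⟩).1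

theorem isFaceOf_pinnedFace (s : Fin d → Bool) (T : Finset (Fin d)) :
    IsFaceOf C (pinnedFace φ s T) :=
  (φ _).2

theorem pinnedFace_subset_pinnedFace_iff {s t : Fin d → Bool} {T T' : Finset (Fin d)} :
    pinnedFace φ t T' ⊆ pinnedFace φ s T ↔ pinnedCubeFace t T' ⊆ pinnedCubeFace s T :=
  φ.le_iff_le

theorem pinnedFace_ssubset {s : Fin d → Bool} {T T' : Finset (Fin d)} (h : T ⊂ T') :
    pinnedFace φ s T' ⊂ pinnedFace φ s T :=
  φ.lt_iff_lt.mpr (pinnedCubeFace_ssubset h)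

theorem pinnedFace_empty (s : Fin d → Bool) : pinnedFace φ s ∅ = C := by
  refine (isFaceOf_pinnedFace φ s ∅).subset.antisymm ?_
  have : φ.symm ⟨C, isFaceOf_self C⟩ ≤ ⟨pinnedCubeFace s ∅, isFaceOf_pinnedCubeFace s ∅⟩ := by
    change _ ⊆ pinnedCubeFace s ∅
    exact (pinnedCubeFace_empty s).symm ▸ (φ.symm _).2.subset
  exact φ.symm_apply_le.mp this

/-- `false` stands for an unbarred index and `true` for a barred one: `F_{x ȳ}` is
`pairFace φ x y false true`. -/
def pairFace (x y : Fin d) (a b : Bool) : Set (Fin d → ℝ) :=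
  pinnedFace φ (fun k => if k = x then a else b) {x, y}

variable {φ}

theorem IsCubeFaceImage.eq_pinnedFace {I J : Set (Fin d)} {F : Set (Fin d → ℝ)}
    (hF : IsCubeFaceImage φ I J F) {s : Fin d → Bool} {T : Finset (Fin d)}
    (hT : (T : Set (Fin d)) = I ∪ J) (hI : ∀ k ∈ I, s k = false) (hJ : ∀ k ∈ J, s k = true) :
    F = pinnedFace φ s T := by
  obtain ⟨_, rfl⟩ := hF
  simp_rw [pinnedFace, cubeFace_eq_pinnedCubeFace hT hI hJ]

variable (hC : IsPolytope C) (hCne : C.Nonempty) (hdim : dimSet C = d)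
include hC hCne hdim

theorem dimSet_pinnedFace_add_card (s : Fin d → Bool) (T : Finset (Fin d)) :
    dimSet (pinnedFace φ s T) + T.card = d := by
  have hanti : StrictAnti fun T => dimSet (pinnedFace φ s T) := fun T T' h =>
    (isFaceOf_pinnedFace φ s T').dimSet_lt ((isFaceOf_pinnedFace φ s T').nonempty hC hCne)
      (isFaceOf_pinnedFace φ s T).subset (pinnedFace_ssubset φ h)
  have h₁ := hanti.add_card_sdiff_le T.empty_subset
  have h₂ := hanti.add_card_sdiff_le T.subset_univ
  have hT := T.card_le_univ
  simp only [pinnedFace_empty, hdim, Finset.sdiff_empty, ← Finset.compl_eq_univ_sdiff,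
    Finset.card_compl, Fintype.card_fin] at h₁ h₂ hT
  omega

theorem areParallel_pairFace {x y : Fin d} (hxy : x ≠ y) {a a' b b' : Bool}
    (h₁ : AreParallel (pairFace φ x y a' b') (pairFace φ x y a b'))
    (h₂ : AreParallel (pairFace φ x y a' b') (pairFace φ x y a' b)) :
    AreParallel (pairFace φ x y a' b') (pairFace φ x y a b) := by
  have hx {a b : Bool} : pairFace φ x y a b ⊆ pinnedFace φ (fun _ => a) {x} :=
    (pinnedFace_subset_pinnedFace_iff φ).mpr <|
      pinnedCubeFace_subset_pinnedCubeFace (by simp) (by simp)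
  have hy {a b : Bool} : pairFace φ x y a b ⊆ pinnedFace φ (fun _ => b) {y} :=
    (pinnedFace_subset_pinnedFace_iff φ).mpr <|
      pinnedCubeFace_subset_pinnedCubeFace (by simp) (by simp [hxy.symm])
  have hdimP : dimSet (pinnedFace φ (fun _ => a) {x}) + 1 = d := by
    simpa using dimSet_pinnedFace_add_card hC hCne hdim (fun _ => a) {x}
  have hdimG (a b : Bool) : dimSet (pairFace φ x y a b) + 2 = d := by
    simpa [Finset.card_pair hxy, pairFace] using
      dimSet_pinnedFace_add_card hC hCne hdim (fun k => if k = x then a else b) {x, y}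
  refine areParallel_of_subset_inter (isFaceOf_pinnedFace φ _ _)
    (isFaceOf_pinnedFace φ _ _).subset ?_ (by linarith [hdimG a' b']) hx hy hx hy
    ((isFaceOf_pinnedFace φ _ _).nonempty hC hCne) (by linarith [hdimG a b, hdimG a' b']) h₁ h₂
  rw [pinnedFace_subset_pinnedFace_iff]
  intro h
  simpa [hxy.symm] using subset_of_pinnedCubeFace_subset h

end CombinatorialCube

theorem three_parallel_implies_fourth_general
    (d : ℕ) (C : Set (Fin d → ℝ))
    (hC : IsCombinatorialCube d C)
    (φ : {F : Set (Fin d → ℝ) // IsFaceOf (unitCube d) F} ≃o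
         {F : Set (Fin d → ℝ) // IsFaceOf C F})
    (x y : Fin d) (hxy : x ≠ y)
    (Fxy Fxby Fbxy Fbxby : Set (Fin d → ℝ))
    (hFxy : IsCubeFaceImage φ {x, y} ∅ Fxy)
    (hFxby : IsCubeFaceImage φ {x} {y} Fxby)
    (hFbxy : IsCubeFaceImage φ {y} {x} Fbxy)
    (hFbxby : IsCubeFaceImage φ ∅ {x, y} Fbxby)
    (h3 : (AreParallel Fxy Fxby ∧ AreParallel Fxy Fbxy ∧ AreParallel Fxby Fbxy) ∨
          (AreParallel Fxy Fxby ∧ AreParallel Fxy Fbxby ∧ AreParallel Fxby Fbxby) ∨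
          (AreParallel Fxy Fbxy ∧ AreParallel Fxy Fbxby ∧ AreParallel Fbxy Fbxby) ∨
          (AreParallel Fxby Fbxy ∧ AreParallel Fxby Fbxby ∧ AreParallel Fbxy Fbxby)) :
    AreParallel Fxy Fxby ∧ AreParallel Fxy Fbxy ∧ AreParallel Fxy Fbxby ∧
    AreParallel Fxby Fbxy ∧ AreParallel Fxby Fbxby ∧ AreParallel Fbxy Fbxby := by
  obtain ⟨⟨V, -, hV⟩, hdim, -⟩ := hC
  have hCne : C.Nonempty := nonempty_of_dimSet_pos (hdim.symm ▸ x.pos)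
  have key {a a' b b' : Bool} := areParallel_pairFace (φ := φ) ⟨V, hV⟩ hCne hdim hxy
    (a := a) (a' := a') (b := b) (b' := b')
  obtain rfl : Fxy = pairFace φ x y false false :=
    hFxy.eq_pinnedFace (by simp) (by simp) (by simp)
  obtain rfl : Fxby = pairFace φ x y false true :=
    hFxby.eq_pinnedFace (by simpa using Set.pair_comm x y) (by simp) (by simp [hxy.symm])
  obtain rfl : Fbxy = pairFace φ x y true false :=
    hFbxy.eq_pinnedFace (by simp) (by simp [hxy.symm]) (by simp)
  obtain rfl : Fbxby = pairFace φ x y true true :=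
    hFbxby.eq_pinnedFace (by simp) (by simp) (by simp)
  rcases h3 with ⟨h₁, h₂, -⟩ | ⟨h₁, h₂, h₃⟩ | ⟨h₁, h₂, h₃⟩ | ⟨-, h₂, h₃⟩
  · exact h₁.pairwise h₂ (key h₂ h₁)
  · exact h₁.pairwise (h₁.trans (key h₃ h₁.symm)) h₂
  · exact (h₁.trans (key h₁.symm h₃)).pairwise h₁ h₂
  · have h₄ := (key h₂.symm h₃.symm).symm
    exact (h₄.trans h₂.symm).pairwise (h₄.trans h₃.symm) h₄

/-- For a `d`-dimensional smooth combinatorial cube with `d ≥ 3` and distinct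
`x, y`, if three of the four `(d-2)`-dimensional faces `F_{xy}`, `F_{x ȳ}`, `F_{x̄ y}`,
`F_{x̄ ȳ}` are pairwise parallel, then all four are pairwise parallel. -/
theorem three_parallel_implies_fourth
    (d : ℕ) (hd : 3 ≤ d) (C : Set (Fin d → ℝ))
    (hC : IsCombinatorialCube d C) (hsmooth : IsSmoothPolytope C)
    (φ : {F : Set (Fin d → ℝ) // IsFaceOf (unitCube d) F} ≃o
         {F : Set (Fin d → ℝ) // IsFaceOf C F})
    (x y : Fin d) (hxy : x ≠ y)
    (Fxy Fxby Fbxy Fbxby : Set (Fin d → ℝ))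
    (hFxy : IsCubeFaceImage φ {x, y} ∅ Fxy)
    (hFxby : IsCubeFaceImage φ {x} {y} Fxby)
    (hFbxy : IsCubeFaceImage φ {y} {x} Fbxy)
    (hFbxby : IsCubeFaceImage φ ∅ {x, y} Fbxby)
    (h3 : (AreParallel Fxy Fxby ∧ AreParallel Fxy Fbxy ∧ AreParallel Fxby Fbxy) ∨
          (AreParallel Fxy Fxby ∧ AreParallel Fxy Fbxby ∧ AreParallel Fxby Fbxby) ∨
          (AreParallel Fxy Fbxy ∧ AreParallel Fxy Fbxby ∧ AreParallel Fbxy Fbxby) ∨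
          (AreParallel Fxby Fbxy ∧ AreParallel Fxby Fbxby ∧ AreParallel Fbxy Fbxby)) :
    AreParallel Fxy Fxby ∧ AreParallel Fxy Fbxy ∧ AreParallel Fxy Fbxby ∧
    AreParallel Fxby Fbxy ∧ AreParallel Fxby Fbxby ∧ AreParallel Fbxy Fbxby :=
  three_parallel_implies_fourth_general d C hC φ x y hxy Fxy Fxby Fbxy Fbxby hFxy hFxby hFbxy hFbxby
    h3
end
end
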